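/- arXiv:0907.5339 — 5 statements merged into one kernel-verified Lean document; each statement's English description precedes it below -/
import Mathlib

section
/- (Lifting criterion.) Let p : E → B be a covering of small categories, X a path connected small category, f : X → B a functor, and fix an object b₀ of B, e₀ ∈ p⁻¹(b₀), and x₀ an object of X with f(x₀) = b₀. Then there exists a (necessarily unique) functor g : X → E with p ∘ g = f and g(x₀) = e₀ if and only if f_*(π₁(X,x₀)) ⊆ p_*(π₁(E,e₀)) as subgroups of π₁(B,b₀). -/
open CategoryTheory

universe v u v' u' w

namespace Paper

variable (C : Type u) [Category.{v} C]

/-- The groupoidification `π(C)` of `C`: the localization of `C` at all of its morphisms,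
whose morphisms are equivalence classes of zigzags of morphisms of `C`. -/
abbrev piCat := (⊤ : MorphismProperty C).Localization

/-- The canonical functor `C ⥤ π(C)` (the identity on objects). -/
abbrev piQ : C ⥤ piCat C := (⊤ : MorphismProperty C).Q

lemma piQ_isIso {x y : C} (f : x ⟶ y) : IsIso ((piQ C).map f) :=
  MorphismProperty.Q_inverts ⊤ f trivial

/-- `π₀(C)`: the set of objects of `C` modulo the equivalence relation generated by
`a ∼ b` whenever there is a morphism `a ⟶ b`. -/
abbrev pi0 := ConnectedComponents C

/-- The fundamental group `π₁(C, x) = Hom_{π(C)}(x, x)` (the group of automorphisms of `x`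
in the groupoidification of `C`; every morphism of `π(C)` is invertible). -/
abbrev pi1 (x : C) := Aut ((piQ C).obj x)

variable {C} {D : Type u'} [Category.{v'} D]

/-- The functor `π(C) ⥤ π(D)` induced by `F : C ⥤ D`. -/
noncomputable def piMap (F : C ⥤ D) : piCat C ⥤ piCat D :=
  Localization.Construction.lift (F ⋙ piQ D)
    (fun _ _ f _ => MorphismProperty.Q_inverts ⊤ (F.map f) trivial)

/-- The homomorphism `π₁(C, x) →* π₁(D, F(x))` induced by `F : C ⥤ D`. -/
noncomputable def pi1Map (F : C ⥤ D) (x : C) : pi1 C x →* pi1 D (F.obj x) :=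
  (piMap F).mapAut ((piQ C).obj x)

/-- Transport of fundamental groups along an equality of base points. -/
noncomputable def pi1Cast {x y : C} (h : x = y) : pi1 C x ≃* pi1 C y := by subst h; exact MulEquiv.refl _

/-- A functor `F : C ⥤ D` is a weak 1-equivalence if the induced maps
`π₀(C) → π₀(D)` and `π₁(C, x) → π₁(D, F(x))` (for every object `x`) are bijections. -/
structure IsWeak1Equiv (F : C ⥤ D) : Prop where
  bij0 : Function.Bijective F.mapConnectedComponents
  bij1 : ∀ x : C, Function.Bijective (pi1Map F x)

end Paper
namespace Paper

/-- The terminal category `∗`. -/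
abbrev Pt := Discrete PUnit.{1}

/-- The inclusion `∗ → [1]` picking the object `0`. -/
def pick0 : Pt ⥤ Fin 2 := (Functor.const Pt).obj 0
/-- The inclusion `∗ → [1]` picking the object `1`. -/
def pick1 : Pt ⥤ Fin 2 := (Functor.const Pt).obj 1
/-- The inclusion `∗ → [1]ᵒᵖ` picking the object `0`. -/
def pick0op : Pt ⥤ (Fin 2)ᵒᵖ := (Functor.const Pt).obj (Opposite.op 0)

/-- Right lifting property of `p` against `u`, for strictly commuting squares of functors. -/
def FunctorRLP {A : Type*} {X : Type*} {E : Type*} {B : Type*}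
    [Category A] [Category X] [Category E] [Category B]
    (u : A ⥤ X) (p : E ⥤ B) : Prop :=
  ∀ (F : A ⥤ E) (G : X ⥤ B), F ⋙ p = u ⋙ G → ∃ H : X ⥤ E, u ⋙ H = F ∧ H ⋙ p = G

/-- Unique right lifting property of `p` against `u`. -/
def FunctorURLP {A : Type*} {X : Type*} {E : Type*} {B : Type*}
    [Category A] [Category X] [Category E] [Category B]
    (u : A ⥤ X) (p : E ⥤ B) : Prop :=
  ∀ (F : A ⥤ E) (G : X ⥤ B), F ⋙ p = u ⋙ G → ∃! H : X ⥤ E, u ⋙ H = F ∧ H ⋙ p = G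

/-- A functor is a covering iff it has the unique right lifting property with
respect to the two inclusions `∗ → [1]` picking `0` and `1`. -/
def IsCovering {E : Type*} {B : Type*} [Category E] [Category B] (p : E ⥤ B) : Prop :=
  FunctorURLP pick0 p ∧ FunctorURLP pick1 p

/-- The category `I₂ : 1 ← 0 → 2`. -/
inductive I2 : Type
  | z | a | b

instance : PartialOrder I2 where
  le x y := x = y ∨ x = I2.z
  le_refl x := Or.inl rfl
  le_trans x y z hxy hyz := hxy.elim (fun h => h ▸ hyz) fun h => Or.inr h
  le_antisymm x y hxy hyx := by
    rcases hxy with h | h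
    · exact h
    · rcases hyx with h' | h'
      · exact h'.symm
      · rw [h, h']

/-- The identity-on-objects functor `I₂ ⥤ [2]`. -/
def i2Incl : I2 ⥤ Fin 3 :=
  Monotone.functor (f := fun x => match x with | I2.z => 0 | I2.a => 1 | I2.b => 2)
    (by rintro x y (rfl | rfl)
        · exact le_refl _
        · cases y <;> simp)

/-- The objects of the category `CS¹ : 0 → 1 ⇉ 2` (with `0` initial). -/
inductive CS1 : Type
  | x0 | x1 | x2

/-- The morphisms of `CS¹`. -/
inductive CS1.Hom : CS1 → CS1 → Type
  | id (x : CS1) : CS1.Hom x x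
  | a : CS1.Hom CS1.x0 CS1.x1
  | c : CS1.Hom CS1.x0 CS1.x2
  | f : CS1.Hom CS1.x1 CS1.x2
  | g : CS1.Hom CS1.x1 CS1.x2

/-- Composition in `CS¹`. -/
def CS1.comp : ∀ {x y z : CS1}, CS1.Hom x y → CS1.Hom y z → CS1.Hom x z
  | _, _, _, .id _, h => h
  | _, _, _, .a, .id _ => .a
  | _, _, _, .a, .f => .c
  | _, _, _, .a, .g => .c
  | _, _, _, .c, .id _ => .c
  | _, _, _, .f, .id _ => .f
  | _, _, _, .g, .id _ => .g

instance : Category CS1 where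
  Hom := CS1.Hom
  id := CS1.Hom.id
  comp := CS1.comp
  id_comp _ := rfl
  comp_id u := by cases u <;> rfl
  assoc u v w := by cases u <;> cases v <;> cases w <;> rfl

/-- The identity-on-objects functor `CS¹ ⥤ [2]`. -/
def cs1Incl : CS1 ⥤ Fin 3 where
  obj x := match x with | CS1.x0 => 0 | CS1.x1 => 1 | CS1.x2 => 2
  map {x y} u := match u with
    | .id _ => 𝟙 _
    | .a => homOfLE (by decide)
    | .c => homOfLE (by decide)
    | .f => homOfLE (by decide)
    | .g => homOfLE (by decide)
  map_id _ := rfl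
  map_comp _ _ := Subsingleton.elim _ _

/-- A functor is a fibration of the 1-type model structure iff it has the right
lifting property with respect to the six members of the set `J`:
`∗ → [1]`, `∗ → [1]ᵒᵖ`, `I₂ → [2]`, `I₂ᵒᵖ → [2]ᵒᵖ`, `CS¹ → [2]`, `(CS¹)ᵒᵖ → [2]ᵒᵖ`. -/
def Is1Fibration {E : Type*} {B : Type*} [Category E] [Category B] (p : E ⥤ B) : Prop :=
  FunctorRLP pick0 p ∧ FunctorRLP pick0op p ∧
  FunctorRLP i2Incl p ∧ FunctorRLP i2Incl.op p ∧
  FunctorRLP cs1Incl p ∧ FunctorRLP cs1Incl.op p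

end Paper

/-!
A covering has unique lifts of arrows with prescribed source or target, so its fibres form a
functor `B ⥤ Type` all of whose maps are bijections; it therefore factors through `π(B)` as the
monodromy functor. Functors `g` with `g ⋙ p = f` are the same as sections of `f ⋙ fiberFunctor`.
On the connected groupoid `π(X)`, a point `e₀` over `f x₀` extends to a section of
`π(f) ⋙ monodromy` iff every loop at `x₀` fixes it. Loops in the image of `π₁(E, e₀)` fix `e₀`,
because `e ↦ e` is a section of `π(p) ⋙ monodromy`; so the inclusion of images of fundamental
groups yields the lift, and connectedness makes it unique. The converse is functoriality of `π₁`.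
-/

namespace CategoryTheory

lemma Localization.Construction.lift_map_Q {C D : Type*} [Category C] [Category D]
    {W : MorphismProperty C} (G : C ⥤ D) (hG : W.IsInvertedBy G) {x y : C} (f : x ⟶ y) :
    (lift G hG).map (W.Q.map f) = G.map f :=
  (Functor.congr_hom (fac G hG) f).trans ((Category.id_comp _).trans (Category.comp_id _))

lemma Localization.Construction.map_apply_eq_of_map_Q {C : Type*} [Category C]
    {W : MorphismProperty C} (G : W.Localization ⥤ Type*) (s : ∀ c : C, G.obj (W.Q.obj c))
    (hs : ∀ ⦃c c' : C⦄ (f : c ⟶ c'), G.map (W.Q.map f) (s c) = s c') {c c' : C}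
    (ψ : W.Q.obj c ⟶ W.Q.obj c') : G.map ψ (s c) = s c' := by
  let τ : W.Q ⋙ (Functor.const _).obj PUnit ⟶ W.Q ⋙ G :=
    { app c := TypeCat.ofHom fun _ => s c
      naturality _ _ f := by ext; exact (hs f).symm }
  have := ConcreteCategory.congr_hom ((natTransExtension τ).naturality ψ) PUnit.unit
  simp only [natTransExtension, NatTransExtension.app_eq] at this
  exact this.symm

lemma Functor.sections_ext_of_isPreconnected {J : Type*} [Category J] [IsPreconnected J]
    {F : J ⥤ Type*} (hF : ∀ ⦃j j' : J⦄ (u : j ⟶ j'), Function.Injective (F.map u))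
    {s t : ∀ j, F.obj j} (hs : s ∈ F.sections) (ht : t ∈ F.sections) {j₀ : J}
    (h₀ : s j₀ = t j₀) : s = t := by
  funext j
  refine induct_on_objects {j | s j = t j} h₀ (fun u => ⟨fun h => ?_, fun h => ?_⟩) j
  · exact (hs u).symm.trans ((congrArg _ h).trans (ht u))
  · exact hF u ((hs u).trans (h.trans (ht u).symm))

lemma exists_mem_sections_of_map_eq {G : Type*} [Category G] [IsGroupoid G] (F : G ⥤ Type*)
    {a : G} (hconn : ∀ x, Nonempty (a ⟶ x)) (v : F.obj a)
    (hv : ∀ α : Aut a, F.map α.hom v = v) :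
    ∃ s ∈ F.sections, s a = v := by
  let γ x := (hconn x).some
  have hγ : ∀ {x} (φ : a ⟶ x), F.map φ v = F.map (γ x) v := fun {x} φ =>
    calc F.map φ v = F.map ((φ ≫ inv (γ x)) ≫ γ x) v := by simp
      _ = F.map (γ x) (F.map (asIso (φ ≫ inv (γ x))).hom v) := F.map_comp_apply _ _ _
      _ = F.map (γ x) v := congrArg _ (hv (asIso _))
  refine ⟨fun x => F.map (γ x) v, fun {x y} u => ?_, (hγ (𝟙 a)).symm.trans (by simp)⟩
  rw [← Functor.map_comp_apply, hγ]

lemma ComposableArrows.mk₁_comp_eq_mk₁_iff {E B : Type*} [Category E] [Category B]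
    (p : E ⥤ B) {e e' : E} (φ : e ⟶ e') {b b' : B} (g : b ⟶ b') :
    mk₁ φ ⋙ p = mk₁ g ↔ p.IsHomLift g φ := by
  constructor
  · intro h
    exact IsHomLift.of_fac' p g φ (Functor.congr_obj h 0) (Functor.congr_obj h 1)
      (Functor.congr_hom h (homOfLE (by decide : (0 : Fin 2) ≤ 1)))
  · intro _
    have h₀ : p.obj e = b := IsHomLift.domain_eq p g φ
    have h₁ : p.obj e' = b' := IsHomLift.codomain_eq p g φ
    exact ComposableArrows.ext₁ h₀ h₁ (IsHomLift.fac' p g φ)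

end CategoryTheory

namespace Paper

open ComposableArrows

section Groupoidification

variable {C : Type u} [Category.{v} C] {D : Type u'} [Category.{v'} D]

lemma piQ_comp_piMap (F : C ⥤ D) : piQ C ⋙ piMap F = F ⋙ piQ D :=
  Localization.Construction.fac _ _

lemma piMap_map_piQ_map (F : C ⥤ D) {x y : C} (f : x ⟶ y) :
    (piMap F).map ((piQ C).map f) = (piQ D).map (F.map f) :=
  Localization.Construction.lift_map_Q _ _ f

lemma piMap_comp {D' : Type*} [Category D'] (F : C ⥤ D) (G : D ⥤ D') :
    piMap (F ⋙ G) = piMap F ⋙ piMap G :=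
  Localization.Construction.uniq _ _ <| by
    rw [piQ_comp_piMap, ← Functor.assoc, piQ_comp_piMap, Functor.assoc F (piQ D), piQ_comp_piMap]
    rfl

lemma pi1Map_comp {D' : Type*} [Category D'] (F : C ⥤ D) (G : D ⥤ D') (x : C) :
    pi1Map (F ⋙ G) x = (pi1Map G (F.obj x)).comp (pi1Map F x) := by
  ext α
  exact (Functor.congr_hom (piMap_comp F G) α.hom).trans
    ((Category.id_comp _).trans (Category.comp_id _))

lemma nonempty_hom_piQ_obj [IsPreconnected C] (x₀ : C) (y : piCat C) :
    Nonempty ((piQ C).obj x₀ ⟶ y) := by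
  have h (x : C) : Nonempty ((piQ C).obj x₀ ⟶ (piQ C).obj x) :=
    induct_on_objects {x | Nonempty ((piQ C).obj x₀ ⟶ (piQ C).obj x)} ⟨𝟙 _⟩ (fun u =>
      ⟨fun ⟨γ⟩ => ⟨γ ≫ (piQ C).map u⟩, fun ⟨γ⟩ => ⟨γ ≫ inv ((piQ C).map u)⟩⟩) x
  obtain ⟨γ⟩ := h ((piQ C).objPreimage y)
  exact ⟨γ ≫ ((piQ C).objObjPreimageIso y).hom⟩

end Groupoidification

lemma Pt.functor_ext {C : Type*} [Category C] {F G : Pt ⥤ C}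
    (h : F.obj ⟨⟨⟩⟩ = G.obj ⟨⟨⟩⟩) : F = G :=
  CategoryTheory.Functor.ext (fun ⟨⟨⟩⟩ => h) (by rintro ⟨⟨⟩⟩ ⟨⟨⟩⟩ ⟨⟨⟨⟩⟩⟩; simp)

namespace IsCovering

variable {E : Type u} {B : Type u'} [Category.{v} E] [Category.{v'} B] {p : E ⥤ B}
  (hp : IsCovering p)
include hp

lemma exists_isHomLift_from {b b' : B} (g : b ⟶ b') {e : E} (he : p.obj e = b) :
    ∃ (e' : E) (φ : e ⟶ e'), p.IsHomLift g φ := by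
  obtain ⟨H, ⟨h₀, hH⟩, -⟩ := hp.1 ((Functor.const Pt).obj e) (mk₁ g) (Pt.functor_ext he)
  obtain ⟨e₀, e', φ, rfl⟩ := mk₁_surjective H
  obtain rfl : e₀ = e := Functor.congr_obj h₀ ⟨⟨⟩⟩
  exact ⟨e', φ, (mk₁_comp_eq_mk₁_iff p φ g).1 hH⟩

lemma exists_isHomLift_to {b b' : B} (g : b ⟶ b') {e : E} (he : p.obj e = b') :
    ∃ (e' : E) (φ : e' ⟶ e), p.IsHomLift g φ := by
  obtain ⟨H, ⟨h₁, hH⟩, -⟩ := hp.2 ((Functor.const Pt).obj e) (mk₁ g) (Pt.functor_ext he)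
  obtain ⟨e', e₁, φ, rfl⟩ := mk₁_surjective H
  obtain rfl : e₁ = e := Functor.congr_obj h₁ ⟨⟨⟩⟩
  exact ⟨e', φ, (mk₁_comp_eq_mk₁_iff p φ g).1 hH⟩

/-- Equality in `ComposableArrows E 1` identifies the two lifts together with their targets. -/
lemma mk₁_eq_of_isHomLift_from {b b' : B} (g : b ⟶ b') {e e₁ e₂ : E} (φ₁ : e ⟶ e₁)
    (φ₂ : e ⟶ e₂) [p.IsHomLift g φ₁] [p.IsHomLift g φ₂] : mk₁ φ₁ = mk₁ φ₂ := by
  have he : p.obj e = b := IsHomLift.domain_eq p g φ₁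
  exact (hp.1 ((Functor.const Pt).obj e) (mk₁ g) (Pt.functor_ext he)).unique
    ⟨Pt.functor_ext rfl, (mk₁_comp_eq_mk₁_iff p φ₁ g).2 inferInstance⟩
    ⟨Pt.functor_ext rfl, (mk₁_comp_eq_mk₁_iff p φ₂ g).2 inferInstance⟩

lemma mk₁_eq_of_isHomLift_to {b b' : B} (g : b ⟶ b') {e e₁ e₂ : E} (φ₁ : e₁ ⟶ e)
    (φ₂ : e₂ ⟶ e) [p.IsHomLift g φ₁] [p.IsHomLift g φ₂] : mk₁ φ₁ = mk₁ φ₂ := by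
  have he : p.obj e = b' := IsHomLift.codomain_eq p g φ₁
  exact (hp.2 ((Functor.const Pt).obj e) (mk₁ g) (Pt.functor_ext he)).unique
    ⟨Pt.functor_ext rfl, (mk₁_comp_eq_mk₁_iff p φ₁ g).2 inferInstance⟩
    ⟨Pt.functor_ext rfl, (mk₁_comp_eq_mk₁_iff p φ₂ g).2 inferInstance⟩

lemma eq_of_isHomLift {b b' : B} (g : b ⟶ b') {e e' : E} (φ ψ : e ⟶ e') [p.IsHomLift g φ]
    [p.IsHomLift g ψ] : φ = ψ :=
  (Functor.congr_hom (hp.mk₁_eq_of_isHomLift_from g φ ψ)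
    (homOfLE (by decide : (0 : Fin 2) ≤ 1))).trans
      ((Category.id_comp _).trans (Category.comp_id _))

lemma faithful : p.Faithful where
  map_injective {_ _ φ ψ} h := by
    have : p.IsHomLift (p.map φ) ψ := h ▸ IsHomLift.map p ψ
    exact hp.eq_of_isHomLift (p.map φ) φ ψ

noncomputable def transport {b b' : B} (g : b ⟶ b') (x : {e : E // p.obj e = b}) :
    {e : E // p.obj e = b'} :=
  ⟨(hp.exists_isHomLift_from g x.2).choose, by
    obtain ⟨φ, _⟩ := (hp.exists_isHomLift_from g x.2).choose_spec
    exact IsHomLift.codomain_eq p g φ⟩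

lemma transport_eq_iff {b b' : B} (g : b ⟶ b') (x : {e : E // p.obj e = b})
    (y : {e : E // p.obj e = b'}) :
    hp.transport g x = y ↔ ∃ φ : x.1 ⟶ y.1, p.IsHomLift g φ := by
  constructor
  · rintro rfl
    exact (hp.exists_isHomLift_from g x.2).choose_spec
  · rintro ⟨φ, _⟩
    obtain ⟨φ', _⟩ := (hp.exists_isHomLift_from g x.2).choose_spec
    exact Subtype.ext (Functor.congr_obj (hp.mk₁_eq_of_isHomLift_from g φ' φ) 1)

lemma bijective_transport {b b' : B} (g : b ⟶ b') :
    Function.Bijective (hp.transport (p := p) g) := by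
  constructor
  · intro x₁ x₂ h
    obtain ⟨φ₁, _⟩ := (hp.transport_eq_iff g x₁ _).1 rfl
    obtain ⟨φ₂, _⟩ := (hp.transport_eq_iff g x₂ _).1 h.symm
    exact Subtype.ext (Functor.congr_obj (hp.mk₁_eq_of_isHomLift_to g φ₁ φ₂) 0)
  · intro y
    obtain ⟨e, φ, _⟩ := hp.exists_isHomLift_to g y.2
    exact ⟨⟨e, IsHomLift.domain_eq p g φ⟩, (hp.transport_eq_iff g _ y).2 ⟨φ, inferInstance⟩⟩

noncomputable def fiberFunctor : B ⥤ Type u where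
  obj b := {e : E // p.obj e = b}
  map g := TypeCat.ofHom (hp.transport g)
  map_id b := by
    refine ConcreteCategory.hom_ext _ _ fun x => ?_
    exact (hp.transport_eq_iff _ x x).2 ⟨𝟙 x.1, IsHomLift.id x.2⟩
  map_comp g g' := by
    refine ConcreteCategory.hom_ext _ _ fun x => ?_
    obtain ⟨φ, _⟩ := (hp.transport_eq_iff g x _).1 rfl
    obtain ⟨φ', _⟩ := (hp.transport_eq_iff g' (hp.transport g x) _).1 rfl
    exact (hp.transport_eq_iff _ x _).2 ⟨φ ≫ φ', IsHomLift.comp p g g' φ φ'⟩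

lemma fiberFunctor_map_eq_iff {b b' : B} (g : b ⟶ b') (x : hp.fiberFunctor.obj b)
    (y : hp.fiberFunctor.obj b') :
    hp.fiberFunctor.map g x = y ↔ ∃ φ : x.1 ⟶ y.1, p.IsHomLift g φ :=
  hp.transport_eq_iff g x y

lemma isIso_fiberFunctor_map {b b' : B} (g : b ⟶ b') : IsIso (hp.fiberFunctor.map g) :=
  (isIso_iff_bijective _).2 (hp.bijective_transport g)

noncomputable def monodromy : piCat B ⥤ Type u :=
  Localization.Construction.lift hp.fiberFunctor fun _ _ g _ => hp.isIso_fiberFunctor_map g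

lemma monodromy_map_piQ_map {b b' : B} (g : b ⟶ b') :
    hp.monodromy.map ((piQ B).map g) = hp.fiberFunctor.map g :=
  Localization.Construction.lift_map_Q _ _ g

lemma monodromy_map_piMap_map {e e' : E} (ψ : (piQ E).obj e ⟶ (piQ E).obj e') :
    hp.monodromy.map ((piMap p).map ψ) ⟨e, rfl⟩ = ⟨e', rfl⟩ :=
  Localization.Construction.map_apply_eq_of_map_Q (piMap p ⋙ hp.monodromy) (fun e => ⟨e, rfl⟩)
    (fun e e' φ => by
      simp only [Functor.comp_map, piMap_map_piQ_map]
      exact (hp.fiberFunctor_map_eq_iff _ _ _).2 ⟨φ, IsHomLift.map p φ⟩) ψ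

lemma monodromy_map_pi1Map {b₀ : B} {e₀ : E} (he : p.obj e₀ = b₀) (ε : pi1 E e₀) :
    hp.monodromy.map ((pi1Cast he) (pi1Map p e₀ ε)).hom ⟨e₀, he⟩ = ⟨e₀, he⟩ := by
  subst he
  exact hp.monodromy_map_piMap_map ε.hom

section Lifts

variable {X : Type*} [Category X]

lemma mem_sections_of_comp_eq {g : X ⥤ E} {f : X ⥤ B} (hg : g ⋙ p = f) :
    (fun x => (⟨g.obj x, Functor.congr_obj hg x⟩ : hp.fiberFunctor.obj (f.obj x))) ∈
      (f ⋙ hp.fiberFunctor).sections := by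
  subst hg
  intro x y u
  exact (hp.fiberFunctor_map_eq_iff _ _ _).2 ⟨g.map u, IsHomLift.map p (g.map u)⟩

lemma exists_comp_eq_of_mem_sections (f : X ⥤ B) {s : ∀ x, (f ⋙ hp.fiberFunctor).obj x}
    (hs : s ∈ (f ⋙ hp.fiberFunctor).sections) :
    ∃ g : X ⥤ E, g ⋙ p = f ∧ ∀ x, g.obj x = (s x).1 := by
  have hlift (x y : X) (u : x ⟶ y) := (hp.fiberFunctor_map_eq_iff _ _ _).1 (hs u)
  choose φ hφ using hlift
  refine ⟨{ obj := fun x => (s x).1, map := fun u => φ _ _ u, map_id := fun x => ?_,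
             map_comp := fun u v => ?_ }, ?_, fun _ => rfl⟩
  · have : p.IsHomLift (f.map (𝟙 x)) (𝟙 (s x).1) := by
      rw [f.map_id]; exact IsHomLift.id (s x).2
    exact hp.eq_of_isHomLift (f.map (𝟙 x)) _ _
  · have : p.IsHomLift (f.map (u ≫ v)) (φ _ _ u ≫ φ _ _ v) := by
      rw [f.map_comp]; infer_instance
    exact hp.eq_of_isHomLift (f.map (u ≫ v)) _ _
  · exact CategoryTheory.Functor.ext (fun x => (s x).2) fun x y u => IsHomLift.fac' p _ (φ x y u)

lemma mem_sections_comp_fiberFunctor (f : X ⥤ B) {s : ∀ y, (piMap f ⋙ hp.monodromy).obj y}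
    (hs : s ∈ (piMap f ⋙ hp.monodromy).sections) :
    (fun x => s ((piQ X).obj x)) ∈ (f ⋙ hp.fiberFunctor).sections := fun u => by
  have := hs ((piQ X).map u)
  rw [Functor.comp_map, piMap_map_piQ_map] at this
  exact (ConcreteCategory.congr_hom (hp.monodromy_map_piQ_map (f.map u)) _).symm.trans this

lemma ext_of_comp_eq [IsPreconnected X] {g g' : X ⥤ E} (h : g ⋙ p = g' ⋙ p) {x₀ : X}
    (h₀ : g.obj x₀ = g'.obj x₀) : g = g' := by
  have hobj (x : X) : g.obj x = g'.obj x := congrArg Subtype.val <| congrFun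
    (Functor.sections_ext_of_isPreconnected
      (fun _ _ u => (hp.bijective_transport ((g ⋙ p).map u)).1)
      (hp.mem_sections_of_comp_eq rfl) (hp.mem_sections_of_comp_eq h.symm) (Subtype.ext h₀)) x
  refine CategoryTheory.Functor.ext hobj fun x y u => hp.faithful.map_injective ?_
  simpa [eqToHom_map] using Functor.congr_hom h u

end Lifts

end IsCovering

/-- **lifting criterion.** Let `p : E ⥤ B` be a covering of small categories,
`X` a path connected small category, `f : X ⥤ B` a functor, `b₀` an object of `B`,
`e₀ ∈ p⁻¹(b₀)` and `x₀` an object of `X` with `f(x₀) = b₀`.  Then there is a (necessarily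
unique) functor `g : X ⥤ E` with `p ∘ g = f` and `g(x₀) = e₀` iff
`f₊(π₁(X, x₀)) ⊆ p₊(π₁(E, e₀))` inside `π₁(B, b₀)`. -/
theorem covering_lifting_criterion
    (E : Type u) (B : Type u') (X : Type w) [Category.{v} E] [Category.{v'} B] [Category.{v} X]
    (p : E ⥤ B) (hp : IsCovering p) [IsConnected X] (f : X ⥤ B)
    (b₀ : B) (e₀ : E) (x₀ : X) (he : p.obj e₀ = b₀) (hx : f.obj x₀ = b₀) :
    (∃! g : X ⥤ E, g ⋙ p = f ∧ g.obj x₀ = e₀) ↔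
      ((pi1Cast hx).toMonoidHom.comp (pi1Map f x₀)).range ≤
        ((pi1Cast he).toMonoidHom.comp (pi1Map p e₀)).range := by
  subst hx
  constructor
  · rintro ⟨g, ⟨rfl, rfl⟩, -⟩
    rw [pi1Map_comp]
    exact fun _ ⟨α, hα⟩ => ⟨pi1Map g x₀ α, hα⟩
  · intro hsub
    have hfix (α : pi1 X x₀) :
        (piMap f ⋙ hp.monodromy).map α.hom ⟨e₀, he⟩ = ⟨e₀, he⟩ := by
      obtain ⟨ε, hε⟩ := hsub ⟨α, rfl⟩
      have := hp.monodromy_map_pi1Map he ε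
      rwa [show pi1Cast he (pi1Map p e₀ ε) = pi1Map f x₀ α from hε] at this
    obtain ⟨s, hs, hs₀⟩ := exists_mem_sections_of_map_eq _ (nonempty_hom_piQ_obj x₀) _ hfix
    obtain ⟨g, hgf, hg⟩ :=
      hp.exists_comp_eq_of_mem_sections f (hp.mem_sections_comp_fiberFunctor f hs)
    have hg₀ : g.obj x₀ = e₀ := (hg x₀).trans (congrArg Subtype.val hs₀)
    exact ⟨g, ⟨hgf, hg₀⟩, fun g' ⟨hg'f, hg'₀⟩ =>
      hp.ext_of_comp_eq (hg'f.trans hgf.symm) (hg'₀.trans hg₀.symm)⟩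

end Paper
end

section
/- Let p : E → B be a covering of small categories, b an object of B, and e ∈ p⁻¹(b). Then the induced group homomorphism p_* : π₁(E,e) → π₁(B,b) is injective. -/
open CategoryTheory

universe v u v' u' w

namespace Paper

/-!
Lifting morphisms along the covering `p` transports, along any `g : c ⟶ c'` of `B`, the set of
pairs `(x, δ)` with `p x = c` and `δ : e ⟶ x` in `π(E)`; these sets form a functor `B ⥤ Type`
which inverts every morphism (backward lifts give the inverses), hence a functor on `π(B)`.
The map `δ ↦ (x, δ)` is natural on `π(E)`, because it is natural on `E` where the lift of
`p f` is `f` itself. Applied to `γ : e ⟶ y` in `π(E)` and the trivial pair `(e, 𝟙)`, naturality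
says that transporting `(e, 𝟙)` along `p₊ γ` yields `(y, γ)`, so `γ` is recovered from `p₊ γ`.
-/

open ComposableArrows

section Lifting

variable {E : Type*} {B : Type*} [Category E] [Category B]

lemma Functor.const_obj_comp_eq (J : Type*) [Category J] {X : Type*} [Category X] (a : X)
    (F : X ⥤ E) : (Functor.const J).obj a ⋙ F = (Functor.const J).obj (F.obj a) :=
  CategoryTheory.Functor.ext (fun _ => rfl) (by simp)

lemma sigma_eq_of_mk₁_eq_mk₁ {x y y' : E} {φ : x ⟶ y} {φ' : x ⟶ y'} (h : mk₁ φ = mk₁ φ') :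
    (⟨y, φ⟩ : Σ z, (x ⟶ z)) = ⟨y', φ'⟩ :=
  Sigma.ext (Functor.congr_obj h 1) (Functor.hcongr_hom h (homOfLE (by decide) : (0 : Fin 2) ⟶ 1))

lemma sigma_eq_of_mk₁_eq_mk₁' {x x' y : E} {φ : x ⟶ y} {φ' : x' ⟶ y} (h : mk₁ φ = mk₁ φ') :
    (⟨x, φ⟩ : Σ z, (z ⟶ y)) = ⟨x', φ'⟩ :=
  Sigma.ext (Functor.congr_obj h 0) (Functor.hcongr_hom h (homOfLE (by decide) : (0 : Fin 2) ⟶ 1))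

lemma mk₁_comp_eq_mk₁_iff_isHomLift (p : E ⥤ B) {x y : E} (φ : x ⟶ y) {c c' : B} (g : c ⟶ c') :
    mk₁ φ ⋙ p = mk₁ g ↔ p.IsHomLift g φ := by
  constructor
  · intro h
    have : p.IsHomLift ((mk₁ φ ⋙ p).map (homOfLE (by decide) : (0 : Fin 2) ⟶ 1)) φ :=
      IsHomLift.map p φ
    rwa [h] at this
  · intro _
    have hx := IsHomLift.domain_eq p g φ
    have hy := IsHomLift.codomain_eq p g φ
    exact ext₁ hx hy (IsHomLift.fac' p g φ)

variable {p : E ⥤ B}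

lemma IsCovering.existsUnique_isHomLift_from (hp : IsCovering p) {c c' : B} (g : c ⟶ c')
    (x : E) (hx : p.obj x = c) : ∃! w : Σ y, (x ⟶ y), p.IsHomLift g w.2 := by
  subst hx
  obtain ⟨H, ⟨hH₀, hH⟩, huniq⟩ := hp.1 ((Functor.const Pt).obj x) (mk₁ g)
    (by rw [pick0, Functor.const_obj_comp_eq, Functor.const_obj_comp_eq]; rfl)
  obtain ⟨x', y, φ, rfl⟩ := mk₁_surjective H
  obtain rfl : x' = x := Functor.congr_obj hH₀ ⟨⟨⟩⟩
  refine ⟨⟨y, φ⟩, (mk₁_comp_eq_mk₁_iff_isHomLift p φ g).1 hH, fun ⟨y', φ'⟩ hφ' => ?_⟩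
  exact sigma_eq_of_mk₁_eq_mk₁ (huniq _
    ⟨Functor.const_obj_comp_eq Pt 0 _, (mk₁_comp_eq_mk₁_iff_isHomLift p φ' g).2 hφ'⟩)

lemma IsCovering.existsUnique_isHomLift_to (hp : IsCovering p) {c c' : B} (g : c ⟶ c')
    (y : E) (hy : p.obj y = c') : ∃! w : Σ x, (x ⟶ y), p.IsHomLift g w.2 := by
  subst hy
  obtain ⟨H, ⟨hH₁, hH⟩, huniq⟩ := hp.2 ((Functor.const Pt).obj y) (mk₁ g)
    (by rw [pick1, Functor.const_obj_comp_eq, Functor.const_obj_comp_eq]; rfl)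
  obtain ⟨x, y', φ, rfl⟩ := mk₁_surjective H
  obtain rfl : y' = y := Functor.congr_obj hH₁ ⟨⟨⟩⟩
  refine ⟨⟨x, φ⟩, (mk₁_comp_eq_mk₁_iff_isHomLift p φ g).1 hH, fun ⟨x', φ'⟩ hφ' => ?_⟩
  exact sigma_eq_of_mk₁_eq_mk₁' (huniq _
    ⟨Functor.const_obj_comp_eq Pt 1 _, (mk₁_comp_eq_mk₁_iff_isHomLift p φ' g).2 hφ'⟩)

end Lifting

noncomputable def extendPath {E : Type u} [Category.{v} E] {e x : E}
    (δ : (piQ E).obj e ⟶ (piQ E).obj x) (w : Σ y, (x ⟶ y)) :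
    Σ y, ((piQ E).obj e ⟶ (piQ E).obj y) :=
  ⟨w.1, δ ≫ (piQ E).map w.2⟩

namespace IsCovering

variable {E : Type u} {B : Type u'} [Category.{v} E] [Category.{v'} B] {p : E ⥤ B}
  (hp : IsCovering p)

noncomputable def liftFrom {c c' : B} (g : c ⟶ c') (x : E) (hx : p.obj x = c) : Σ y, (x ⟶ y) :=
  (hp.existsUnique_isHomLift_from g x hx).exists.choose

lemma isHomLift_liftFrom {c c' : B} (g : c ⟶ c') (x : E) (hx : p.obj x = c) :
    p.IsHomLift g (hp.liftFrom g x hx).2 :=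
  (hp.existsUnique_isHomLift_from g x hx).exists.choose_spec

lemma obj_liftFrom {c c' : B} (g : c ⟶ c') (x : E) (hx : p.obj x = c) :
    p.obj (hp.liftFrom g x hx).1 = c' :=
  have := hp.isHomLift_liftFrom g x hx
  IsHomLift.codomain_eq p g (hp.liftFrom g x hx).2

lemma eq_liftFrom {c c' : B} {g : c ⟶ c'} {x : E} (hx : p.obj x = c) {w : Σ y, (x ⟶ y)}
    (hw : p.IsHomLift g w.2) : w = hp.liftFrom g x hx :=
  (hp.existsUnique_isHomLift_from g x hx).unique hw (hp.isHomLift_liftFrom g x hx)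

variable (e : E)

noncomputable def pathsOver : B ⥤ Type (max u v) where
  obj c := {t : Σ x, ((piQ E).obj e ⟶ (piQ E).obj x) // p.obj t.1 = c}
  map {c c'} g := ↾fun t =>
    ⟨extendPath t.1.2 (hp.liftFrom g t.1.1 t.2), hp.obj_liftFrom g t.1.1 t.2⟩
  map_id c := by
    refine ConcreteCategory.ext_apply fun ⟨⟨x, δ⟩, hx⟩ => Subtype.ext ?_
    change extendPath δ (hp.liftFrom (𝟙 c) x hx) = ⟨x, δ⟩
    rw [← hp.eq_liftFrom hx (w := ⟨x, 𝟙 x⟩) (IsHomLift.id hx)]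
    simp [extendPath]
  map_comp {c c' c''} g g' := by
    refine ConcreteCategory.ext_apply fun ⟨⟨x, δ⟩, hx⟩ => Subtype.ext ?_
    have := hp.isHomLift_liftFrom g x hx
    have hy := hp.obj_liftFrom g x hx
    have := hp.isHomLift_liftFrom g' _ hy
    change extendPath δ (hp.liftFrom (g ≫ g') x hx) =
      extendPath (extendPath δ (hp.liftFrom g x hx)).2 (hp.liftFrom g' _ hy)
    rw [← hp.eq_liftFrom hx (w := ⟨_, (hp.liftFrom g x hx).2 ≫ (hp.liftFrom g' _ hy).2⟩)
      (IsHomLift.comp p g g' _ _)]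
    simp [extendPath]

lemma pathsOver_map_injective {c c' : B} (g : c ⟶ c') :
    Function.Injective ((hp.pathsOver e).map g) := by
  rintro ⟨⟨x, δ⟩, hx⟩ ⟨⟨x', δ'⟩, hx'⟩ h
  have hφ := hp.isHomLift_liftFrom g x hx
  have hφ' := hp.isHomLift_liftFrom g x' hx'
  have h' : extendPath δ (hp.liftFrom g x hx) = extendPath δ' (hp.liftFrom g x' hx') :=
    congrArg Subtype.val h
  generalize hp.liftFrom g x hx = w at hφ h'
  generalize hp.liftFrom g x' hx' = w' at hφ' h'
  obtain ⟨y, φ⟩ := w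
  obtain ⟨y', φ'⟩ := w'
  obtain ⟨rfl, hδ⟩ := Sigma.mk.inj_iff.1 h'
  obtain ⟨rfl, hφφ'⟩ := Sigma.mk.inj_iff.1
    ((hp.existsUnique_isHomLift_to g y (IsHomLift.codomain_eq p g φ)).unique hφ hφ')
  obtain rfl := eq_of_heq hφφ'
  have := piQ_isIso E φ
  obtain rfl := (cancel_mono ((piQ E).map φ)).1 (eq_of_heq hδ)
  rfl

lemma pathsOver_map_surjective {c c' : B} (g : c ⟶ c') :
    Function.Surjective ((hp.pathsOver e).map g) := by
  rintro ⟨⟨y, ε⟩, hy⟩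
  obtain ⟨⟨x, ψ⟩, hψ, -⟩ := hp.existsUnique_isHomLift_to g y hy
  have := piQ_isIso E ψ
  have hx := IsHomLift.domain_eq p g ψ
  refine ⟨⟨⟨x, ε ≫ inv ((piQ E).map ψ)⟩, hx⟩, Subtype.ext ?_⟩
  change extendPath _ (hp.liftFrom g x hx) = _
  rw [← hp.eq_liftFrom hx (w := ⟨y, ψ⟩) hψ]
  simp [extendPath]

lemma pathsOver_inverts : (⊤ : MorphismProperty B).IsInvertedBy (hp.pathsOver e) :=
  fun _ _ g _ => (isIso_iff_bijective _).2
    ⟨hp.pathsOver_map_injective e g, hp.pathsOver_map_surjective e g⟩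

noncomputable def piPathsOver : piCat B ⥤ Type (max u v) :=
  Localization.Construction.lift _ (hp.pathsOver_inverts e)

noncomputable def pathsFrom :
    coyoneda.obj (Opposite.op ((piQ E).obj e)) ⟶ piMap p ⋙ hp.piPathsOver e :=
  Localization.Construction.natTransExtension
    { app x := ↾fun δ => (⟨⟨x, δ⟩, rfl⟩ : (hp.pathsOver e).obj (p.obj x))
      naturality x y f := by
        refine ConcreteCategory.ext_apply fun δ => Subtype.ext ?_
        change _ = extendPath δ (hp.liftFrom (p.map f) x rfl)
        rw [← hp.eq_liftFrom rfl (w := ⟨y, f⟩) (IsHomLift.map p f)]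
        rfl }

lemma pathsFrom_app_obj (y : E) (δ : (piQ E).obj e ⟶ (piQ E).obj y) :
    (hp.pathsFrom e).app ((piQ E).obj y) δ = ⟨⟨y, δ⟩, rfl⟩ := by
  rw [pathsFrom, Localization.Construction.natTransExtension_app,
    Localization.Construction.NatTransExtension.app_eq]
  rfl

lemma piPathsOver_map_piMap_map {y : E} (γ : (piQ E).obj e ⟶ (piQ E).obj y) :
    (hp.piPathsOver e).map ((piMap p).map γ)
      (⟨⟨e, 𝟙 _⟩, rfl⟩ : (hp.piPathsOver e).obj ((piMap p).obj ((piQ E).obj e))) =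
      ⟨⟨y, γ⟩, rfl⟩ := by
  have h := types_congr_hom ((hp.pathsFrom e).naturality γ) (𝟙 _)
  simp only [types_comp_apply] at h
  rw [pathsFrom_app_obj, pathsFrom_app_obj] at h
  simpa using h.symm

end IsCovering

theorem IsCovering.faithful_piMap {E : Type u} {B : Type u'} [Category.{v} E] [Category.{v'} B]
    {p : E ⥤ B} (hp : IsCovering p) : (piMap p).Faithful where
  map_injective {X Y} γ γ' h := by
    obtain ⟨x, rfl⟩ : ∃ x, X = (piQ E).obj x := ⟨X.as.obj, rfl⟩
    obtain ⟨y, rfl⟩ : ∃ y, Y = (piQ E).obj y := ⟨Y.as.obj, rfl⟩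
    have := (hp.piPathsOver_map_piMap_map x γ).symm.trans
      (h ▸ hp.piPathsOver_map_piMap_map x γ')
    exact eq_of_heq (Sigma.mk.inj_iff.1 (congrArg Subtype.val this)).2

lemma pi1Map_injective {C : Type u} [Category.{v} C] {D : Type u'} [Category.{v'} D] (F : C ⥤ D)
    [(piMap F).Faithful] (x : C) : Function.Injective (pi1Map F x) :=
  fun _ _ h => Iso.ext ((piMap F).map_injective (congrArg Iso.hom h))

/-- If `p : E ⥤ B` is a covering of small categories, `b` an object of `B`
and `e ∈ p⁻¹(b)`, then the induced homomorphism `p₊ : π₁(E, e) →* π₁(B, b)` is injective. -/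
theorem covering_pi1_injective
    (E : Type u) (B : Type u') [Category.{v} E] [Category.{v'} B]
    (p : E ⥤ B) (hp : IsCovering p) (b : B) (e : E) (he : p.obj e = b) :
    Function.Injective ((pi1Cast he).toMonoidHom.comp (pi1Map p e)) :=
  have := hp.faithful_piMap
  (pi1Cast he).injective.comp (pi1Map_injective p e)

end Paper
end

section
/- Let (C,∗) be a pointed, path connected small category. Then the projection T : Ĉ → C from the Grothendieck construction of Hom_{π(C)}(∗,−) is a covering of small categories. -/
/-! A morphism `(c, w) ⟶ (c', w')` of `Ĉ` is a morphism `g : c ⟶ c'` with `w' = w ≫ g`, so an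
arrow of `C` lifts uniquely once its source is lifted: `Ĉ` is a category of elements. Since `g`
becomes invertible in `π(C)`, `w = w' ≫ g⁻¹` is also forced by `w'`, so an arrow lifts
uniquely once its target is lifted. Thus the projection from the category of elements of any
functor sending every morphism to a bijection is a covering. -/

open CategoryTheory

universe v u v' u' w

namespace Paper

variable (C : Type u) [Category.{v} C]

/-- The functor `Hom_{π(C)}(∗, −) : C ⥤ Type`. -/
noncomputable def homFromBase (x : C) : C ⥤ Type (max u v) :=
  piQ C ⋙ coyoneda.obj (Opposite.op ((piQ C).obj x))

/-- The category `Ĉ`: the Grothendieck construction (category of elements) of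
`Hom_{π(C)}(∗, −) : C ⥤ Type`. -/
noncomputable def Chat (x : C) := (homFromBase C x).Elements

noncomputable instance (x : C) : Category (Chat C x) := by unfold Chat; infer_instance

/-- The projection `T : Ĉ ⥤ C`, `(c, w) ↦ c`. -/
noncomputable def chatT (x : C) : Chat C x ⥤ C := CategoryOfElements.π _

/-- The base point `(∗, id)` of `Ĉ`. -/
noncomputable def chatPt (x : C) : Chat C x := ⟨x, 𝟙 ((piQ C).obj x)⟩

end Paper

namespace Paper

lemma ComposableArrows.mk₁_comp_eq_mk₁_map {E B : Type*} [Category E] [Category B] {X Y : E}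
    (f : X ⟶ Y) (p : E ⥤ B) : ComposableArrows.mk₁ f ⋙ p = ComposableArrows.mk₁ (p.map f) :=
  ComposableArrows.ext₁ rfl rfl
    (by erw [eqToHom_refl, eqToHom_refl, Category.id_comp, Category.comp_id]; rfl)

section Lifting

variable {E : Type*} {B : Type*} [Category E] [Category B]

lemma pt_functor_ext {F G : Pt ⥤ E} (h : F.obj ⟨PUnit.unit⟩ = G.obj ⟨PUnit.unit⟩) : F = G :=
  CategoryTheory.Functor.ext (by rintro ⟨⟨⟩⟩; exact h)
    (by rintro ⟨⟨⟩⟩ ⟨⟨⟩⟩ f; simp [Subsingleton.elim f (𝟙 _)])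

lemma functor_ext_of_comp_faithful {X : Type*} [Category X] {p : E ⥤ B} [p.Faithful]
    {H H' : X ⥤ E} (hobj : ∀ i, H.obj i = H'.obj i) (h : H ⋙ p = H' ⋙ p) : H = H' :=
  CategoryTheory.Functor.ext hobj fun _ _ f =>
    p.map_injective (by simpa [eqToHom_map] using Functor.congr_hom h f)

lemma functorURLP_const {X : Type*} [Category X] {p : E ⥤ B} (i : X)
    (lift : ∀ (e : E) (G : X ⥤ B), p.obj e = G.obj i → ∃ H : X ⥤ E, H.obj i = e ∧ H ⋙ p = G)
    (uniq : ∀ H H' : X ⥤ E, H.obj i = H'.obj i → H ⋙ p = H' ⋙ p → H = H') :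
    FunctorURLP ((Functor.const Pt).obj i) p := by
  intro F G hFG
  obtain ⟨H, hH, hHG⟩ := lift (F.obj ⟨PUnit.unit⟩) G (Functor.congr_obj hFG ⟨PUnit.unit⟩)
  refine ⟨H, ⟨pt_functor_ext hH, hHG⟩, fun H' ⟨hH', hH'G⟩ => uniq _ _ ?_ ?_⟩
  · exact (Functor.congr_obj hH' ⟨PUnit.unit⟩).trans hH.symm
  · exact hH'G.trans hHG.symm

end Lifting

section Elements

open CategoryOfElements

variable {C : Type u} [Category.{v} C] {F : C ⥤ Type w}

lemma elements_eq_of_hom_of_source_eq {a a' b b' : F.Elements} (m : a ⟶ b) (m' : a' ⟶ b')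
    (ha : a = a') (hb : b.1 = b'.1)
    (hm : m.1 = eqToHom (congrArg Sigma.fst ha) ≫ m'.1 ≫ eqToHom hb.symm) : b = b' := by
  subst ha
  obtain ⟨c, y⟩ := b
  obtain ⟨c', y'⟩ := b'
  dsimp only at hb
  subst hb
  refine Functor.Elements.ext _ _ rfl ?_
  simp only [eqToHom_refl, Category.id_comp, Category.comp_id] at hm
  simpa using m.2.symm.trans ((congrArg (fun g => F.map g a.2) hm).trans m'.2)

lemma elements_eq_of_hom_of_target_eq {a a' b b' : F.Elements} (m : a ⟶ b) (m' : a' ⟶ b')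
    (ha : a.1 = a'.1) (hb : b = b')
    (hm : m.1 = eqToHom ha ≫ m'.1 ≫ eqToHom (congrArg Sigma.fst hb).symm)
    (hinj : Function.Injective (F.map m.1)) : a = a' := by
  subst hb
  obtain ⟨c, y⟩ := a
  obtain ⟨c', y'⟩ := a'
  dsimp only at ha
  subst ha
  refine Functor.Elements.ext _ _ rfl (hinj ?_)
  simp only [eqToHom_refl, Category.id_comp, Category.comp_id] at hm
  simpa using m.2.trans ((congrArg (fun g => F.map g y') hm).trans m'.2).symm

lemma elements_exists_lift_left (e : F.Elements) (G : ComposableArrows C 1)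
    (he : (π F).obj e = G.left) :
    ∃ H : ComposableArrows F.Elements 1, H.left = e ∧ H ⋙ π F = G := by
  obtain ⟨c, y⟩ := e
  obtain rfl : c = G.left := he
  refine ⟨.mk₁ (homMk (F.elementsMk _ y) (F.elementsMk _ (F.map G.hom y)) G.hom rfl), rfl,
    ?_⟩
  exact (ComposableArrows.mk₁_comp_eq_mk₁_map _ _).trans G.mk₁_hom

lemma elements_exists_lift_right
    (hF : ∀ {c c' : C} (g : c ⟶ c'), Function.Surjective (F.map g)) (e : F.Elements)
    (G : ComposableArrows C 1) (he : (π F).obj e = G.right) :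
    ∃ H : ComposableArrows F.Elements 1, H.right = e ∧ H ⋙ π F = G := by
  obtain ⟨c, y⟩ := e
  obtain rfl : c = G.right := he
  obtain ⟨y₀, hy₀⟩ := hF G.hom y
  refine ⟨.mk₁ (homMk (F.elementsMk _ y₀) (F.elementsMk _ y) G.hom hy₀), rfl, ?_⟩
  exact (ComposableArrows.mk₁_comp_eq_mk₁_map _ _).trans G.mk₁_hom

lemma elements_lift_unique_left {H H' : ComposableArrows F.Elements 1} (h0 : H.left = H'.left)
    (h : H ⋙ π F = H' ⋙ π F) : H = H' := by
  have h1 : H.right = H'.right := elements_eq_of_hom_of_source_eq H.hom H'.hom h0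
    (Functor.congr_obj h 1) (Functor.congr_hom h (homOfLE (by decide) : (0 : Fin 2) ⟶ 1))
  exact functor_ext_of_comp_faithful (fun i => by fin_cases i; exacts [h0, h1]) h

lemma elements_lift_unique_right
    (hF : ∀ {c c' : C} (g : c ⟶ c'), Function.Injective (F.map g))
    {H H' : ComposableArrows F.Elements 1} (h1 : H.right = H'.right)
    (h : H ⋙ π F = H' ⋙ π F) : H = H' := by
  have h0 : H.left = H'.left := elements_eq_of_hom_of_target_eq H.hom H'.hom
    (Functor.congr_obj h 0) h1 (Functor.congr_hom h (homOfLE (by decide) : (0 : Fin 2) ⟶ 1))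
    (hF _)
  exact functor_ext_of_comp_faithful (fun i => by fin_cases i; exacts [h0, h1]) h

theorem isCovering_elements_π
    (hF : ∀ {c c' : C} (g : c ⟶ c'), Function.Bijective (F.map g)) : IsCovering (π F) :=
  ⟨functorURLP_const 0 elements_exists_lift_left fun _ _ => elements_lift_unique_left,
    functorURLP_const 1 (elements_exists_lift_right fun g => (hF g).2)
      fun _ _ => elements_lift_unique_right fun g => (hF g).1⟩

end Elements

lemma homFromBase_map_bijective (C : Type u) [Category.{v} C] (x : C) {c c' : C}
    (g : c ⟶ c') : Function.Bijective ((homFromBase C x).map g) := by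
  have := piQ_isIso C g
  exact (isIso_iff_bijective _).mp
    (inferInstanceAs (IsIso ((coyoneda.obj _).map ((piQ C).map g))))

theorem chatT_isCovering_general (C : Type u) [Category.{v} C] (x : C) :
    IsCovering (chatT C x) :=
  isCovering_elements_π (homFromBase_map_bijective C x)

/-- **Statement 11.** For a pointed path connected small category `(C, ∗)`, the projection
`T : Ĉ ⥤ C` from the Grothendieck construction of `Hom_{π(C)}(∗, −)` is a covering. -/
theorem chatT_isCovering (C : Type u) [Category.{v} C] [IsConnected C] (x : C) :
    IsCovering (chatT C x) :=
  chatT_isCovering_general C x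

end Paper
end

section
/- A small category C is a groupoid if and only if the unique functor C → ∗ to the terminal category has the right lifting property with respect to every member of the set J; that is, the fibrant objects of the 1-type model structure on Cat are exactly the groupoids. Moreover, every small category is cofibrant (the functor ∅ → C is injective on objects). -/
open CategoryTheory

universe v u v' u' w
/-!
Lifting `C ⥤ ∗` against a functor `u` is the same as extending functors into `C` along `u`.
Along `∗ → [1]` one extends by a constant functor. A span `F` on `I₂` extends along `I₂ → [2]`
exactly when `F(z → b)` factors through `F(z → a)`, and a diagram on `CS¹` extends along
`CS¹ → [2]` as soon as it identifies the two parallel arrows; in a groupoid both conditions hold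
because `F(z → a)` and `F(0 → 1)` are invertible. Conversely, extending the span `(f, 𝟙)` gives
every morphism `f` a retraction, and doing the same in `Cᵒᵖ` gives it a section.
-/

namespace Paper

instance {C : Type u} [Category.{v} C] [IsGroupoid C] : IsGroupoid Cᵒᵖ where
  all_isIso f := inferInstanceAs (IsIso f.unop.op)

def HasExtensionsAlong {A X : Type*} [Category A] [Category X] (u : A ⥤ X)
    (C : Type*) [Category C] : Prop :=
  ∀ F : A ⥤ C, ∃ H : X ⥤ C, u ⋙ H = F

section Extensions

variable {A X : Type*} [Category A] [Category X] {C : Type u} [Category.{v} C]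

theorem functorRLP_star_iff (u : A ⥤ X) :
    FunctorRLP u (Functor.star.{w} C) ↔ HasExtensionsAlong u C := by
  constructor
  · intro h F
    obtain ⟨H, hH, -⟩ := h F (Functor.star X) (Functor.punit_ext' _ _)
    exact ⟨H, hH⟩
  · intro h F G _
    obtain ⟨H, hH⟩ := h F
    exact ⟨H, hH, Functor.punit_ext' _ _⟩

theorem hasExtensionsAlong_op_iff (u : A ⥤ X) :
    HasExtensionsAlong u.op C ↔ HasExtensionsAlong u Cᵒᵖ := by
  constructor
  · intro h F
    obtain ⟨H, hH⟩ := h F.leftOp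
    exact ⟨H.rightOp, congrArg Functor.rightOp hH⟩
  · intro h F
    obtain ⟨H, hH⟩ := h F.rightOp
    exact ⟨H.leftOp, congrArg Functor.leftOp hH⟩

theorem hasExtensionsAlong_const (x₀ : X) :
    HasExtensionsAlong ((Functor.const Pt).obj x₀) C := by
  intro F
  refine ⟨(Functor.const X).obj (F.obj ⟨⟨⟩⟩), CategoryTheory.Functor.ext ?_ ?_⟩
  · rintro ⟨⟨⟩⟩
    rfl
  · rintro ⟨⟨⟩⟩ ⟨⟨⟩⟩ f
    obtain rfl : f = 𝟙 _ := Subsingleton.elim _ _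
    simp

end Extensions

section Span

variable {C : Type u} [Category.{v} C]

def I2.homA : I2.z ⟶ I2.a := homOfLE (Or.inr rfl)

def I2.homB : I2.z ⟶ I2.b := homOfLE (Or.inr rfl)

theorem exists_i2Incl_comp_eq_iff (F : I2 ⥤ C) :
    (∃ H : Fin 3 ⥤ C, i2Incl ⋙ H = F) ↔ ∃ r, F.map I2.homA ≫ r = F.map I2.homB := by
  constructor
  · rintro ⟨H, rfl⟩
    exact ⟨H.map (homOfLE (by decide) : (1 : Fin 3) ⟶ 2), (H.map_comp _ _).symm⟩
  · rintro ⟨r, hr⟩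
    refine ⟨ComposableArrows.mk₂ (F.map I2.homA) r,
      Functor.hext (fun x => by cases x <;> rfl) fun x y f => ?_⟩
    rcases leOfHom f with rfl | rfl
    · obtain rfl : f = 𝟙 _ := Subsingleton.elim _ _
      rw [CategoryTheory.Functor.map_id, CategoryTheory.Functor.map_id]
      cases x <;> rfl
    · cases y
      · obtain rfl : f = 𝟙 _ := Subsingleton.elim _ _
        rw [CategoryTheory.Functor.map_id, CategoryTheory.Functor.map_id]
        rfl
      · obtain rfl : f = I2.homA := Subsingleton.elim _ _
        rfl
      · obtain rfl : f = I2.homB := Subsingleton.elim _ _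
        exact heq_of_eq hr

theorem hasExtensionsAlong_i2Incl [IsGroupoid C] : HasExtensionsAlong i2Incl C := fun F =>
  (exists_i2Incl_comp_eq_iff F).2 ⟨inv (F.map I2.homA) ≫ F.map I2.homB, by simp⟩

def i2Collapse : I2 ⥤ Fin 2 :=
  Monotone.functor (f := fun x => match x with | I2.a => 1 | _ => 0)
    (by rintro x y (rfl | rfl)
        · exact le_rfl
        · exact Fin.zero_le _)

-- `i2Collapse ⋙ ComposableArrows.mk₁ f` is the span `y ←f− x −𝟙→ x`.
theorem exists_retraction_of_hasExtensionsAlong_i2Incl (h : HasExtensionsAlong i2Incl C)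
    {x y : C} (f : x ⟶ y) : ∃ r, f ≫ r = 𝟙 x :=
  (exists_i2Incl_comp_eq_iff (i2Collapse ⋙ ComposableArrows.mk₁ f)).1 (h _)

theorem isIso_of_hasExtensionsAlong_i2Incl (h : HasExtensionsAlong i2Incl C)
    (hop : HasExtensionsAlong i2Incl Cᵒᵖ) {x y : C} (f : x ⟶ y) : IsIso f := by
  obtain ⟨r, hr⟩ := exists_retraction_of_hasExtensionsAlong_i2Incl h f
  obtain ⟨s, hs⟩ := exists_retraction_of_hasExtensionsAlong_i2Incl hop f.op
  have : IsSplitMono f := .mk' ⟨r, hr⟩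
  have : IsSplitEpi f := .mk' ⟨s.unop, Quiver.Hom.op_inj hs⟩
  exact isIso_of_mono_of_isSplitEpi f

end Span

section Circle

variable {C : Type u} [Category.{v} C]

theorem exists_cs1Incl_comp_eq_of_map_f_eq_map_g (F : CS1 ⥤ C)
    (h : F.map CS1.Hom.f = F.map CS1.Hom.g) : ∃ H : Fin 3 ⥤ C, cs1Incl ⋙ H = F := by
  refine ⟨ComposableArrows.mk₂ (F.map CS1.Hom.a) (F.map CS1.Hom.f),
    Functor.hext (fun x => by cases x <;> rfl) fun x y u => ?_⟩
  change CS1.Hom x y at u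
  cases u with
  | id x =>
    show HEq ((cs1Incl ⋙ _).map (𝟙 x)) (F.map (𝟙 x))
    rw [CategoryTheory.Functor.map_id, CategoryTheory.Functor.map_id]
    cases x <;> rfl
  | a | f => rfl
  | c => exact heq_of_eq (F.map_comp CS1.Hom.a CS1.Hom.f).symm
  | g => exact heq_of_eq h

theorem hasExtensionsAlong_cs1Incl [IsGroupoid C] : HasExtensionsAlong cs1Incl C := fun F =>
  exists_cs1Incl_comp_eq_of_map_f_eq_map_g F <| (cancel_epi (F.map CS1.Hom.a)).1 <| by
    rw [← F.map_comp, ← F.map_comp]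
    rfl

end Circle

theorem isGroupoid_iff_is1Fibration_star (C : Type u) [Category.{v} C] :
    IsGroupoid C ↔ Is1Fibration (Functor.star.{w} C) := by
  simp only [Is1Fibration, functorRLP_star_iff, hasExtensionsAlong_op_iff]
  constructor
  · intro _
    exact ⟨hasExtensionsAlong_const _, hasExtensionsAlong_const _, hasExtensionsAlong_i2Incl,
      hasExtensionsAlong_i2Incl, hasExtensionsAlong_cs1Incl, hasExtensionsAlong_cs1Incl⟩
  · rintro ⟨-, -, h, hop, -, -⟩
    exact ⟨isIso_of_hasExtensionsAlong_i2Incl h hop⟩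

/-- **Statement 15.** A small category `C` is a groupoid iff the unique functor `C ⥤ ∗` has
the right lifting property with respect to every member of `J`; i.e. the fibrant objects of
the 1-type model structure are exactly the groupoids.  Moreover every small category is
cofibrant: the functor `∅ ⥤ C` is injective on objects. -/
theorem fibrant_iff_groupoid :
    (∀ (C : Type u) [Category.{v} C],
        (∀ {x y : C} (f : x ⟶ y), IsIso f) ↔ Is1Fibration (Functor.star C)) ∧
    (∀ (C : Type u) [Category.{v} C], Function.Injective (Functor.empty C).obj) := by
  refine ⟨fun C _ => ?_, fun C _ a => a.as.elim⟩
  rw [← isGroupoid_iff_is1Fibration_star]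
  exact ⟨fun h => ⟨h⟩, fun h => h.all_isIso⟩

end Paper
end

section
/- A functor p : E → B between small categories is a covering if and only if p is a fibration in the 1-type model structure (i.e., has the right lifting property with respect to every member of J) and for every object b of B the fiber category p⁻¹(b) is discrete (its only morphisms are identities). -/
open CategoryTheory

universe v u v' u' w
/-!
Functors out of `[1]` are arrows, so unique lifting against the two inclusions `∗ → [1]` says
that every arrow of `B` lifts uniquely once its source (resp. target) is prescribed in `E`.
Such unique lifts solve the lifting problems against `I₂ → [2]` (lift the second arrow of the
chain, the triangle commutes by uniqueness) and against `CS¹ → [2]` (two parallel arrows with the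
same image coincide), and they force discrete fibers. Conversely, two lifts `e → e₁`, `e → e₂` of
the same arrow form a span `I₂ → E` over the chain `0 → 1 → 2` whose second arrow is an identity;
a lift `[2] → E` of it puts an arrow `e₁ → e₂` into a fiber, so discreteness identifies the two
lifts. The statements about targets are the statements about sources for `p.op`.
-/

namespace Paper

open ComposableArrows

lemma arrow_mk_comp_congr {C : Type*} [Category C] {X Y Z X' Y' Z' : C}
    {f : X ⟶ Y} {g : Y ⟶ Z} {f' : X' ⟶ Y'} {g' : Y' ⟶ Z'}
    (hf : Arrow.mk f = Arrow.mk f') (hg : Arrow.mk g = Arrow.mk g') :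
    Arrow.mk (f ≫ g) = Arrow.mk (f' ≫ g') := by
  obtain ⟨rfl, rfl, rfl⟩ := (Arrow.mk_eq_mk_iff _ _).1 hf
  obtain ⟨-, rfl, rfl⟩ := (Arrow.mk_eq_mk_iff _ _).1 hg
  simp

lemma arrow_mk_eqToHom {C : Type*} [Category C] {X Y : C} (h : X = Y) :
    Arrow.mk (eqToHom h) = Arrow.mk (𝟙 X) := by
  subst h; rfl

section LiftingProperties

variable {A X E B : Type*} [Category A] [Category X] [Category E] [Category B]

lemma functorURLP_iff (u : A ⥤ X) (p : E ⥤ B) :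
    FunctorURLP u p ↔
      FunctorRLP u p ∧ ∀ H H' : X ⥤ E, u ⋙ H = u ⋙ H' → H ⋙ p = H' ⋙ p → H = H' := by
  refine ⟨fun h => ⟨fun F G sq => (h F G sq).exists, fun H H' hu hp => ?_⟩,
    fun ⟨hex, huniq⟩ F G sq => ?_⟩
  · exact (h (u ⋙ H) (H ⋙ p) rfl).unique ⟨rfl, rfl⟩ ⟨hu.symm, hp.symm⟩
  · obtain ⟨H, hH⟩ := hex F G sq
    exact ⟨H, hH, fun H' hH' => huniq H' H (hH'.1.trans hH.1.symm) (hH'.2.trans hH.2.symm)⟩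

lemma functorRLP_op_iff (u : A ⥤ X) (p : E ⥤ B) : FunctorRLP u.op p ↔ FunctorRLP u p.op := by
  constructor
  · intro h F G sq
    obtain ⟨H, hu, hp⟩ := h F.leftOp G.leftOp (congrArg Functor.leftOp sq)
    exact ⟨H.rightOp, congrArg Functor.rightOp hu, congrArg Functor.rightOp hp⟩
  · intro h F G sq
    obtain ⟨H, hu, hp⟩ := h F.rightOp G.rightOp (congrArg Functor.rightOp sq)
    exact ⟨H.leftOp, (congrArg Functor.leftOp hu).trans F.rightOp_leftOp_eq,
      (congrArg Functor.leftOp hp).trans G.rightOp_leftOp_eq⟩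

lemma const_comp_eq_iff (x : X) (H : X ⥤ E) (F : Pt ⥤ E) :
    (Functor.const Pt).obj x ⋙ H = F ↔ H.obj x = F.obj ⟨⟨⟩⟩ :=
  ⟨fun h => Functor.congr_obj h _, fun h => Discrete.functor_ext fun _ => h⟩

end LiftingProperties

section ArrowLifts

variable {E B : Type*} [Category E] [Category B]

def LiftsFrom (p : E ⥤ B) : Prop :=
  ∀ (e : E) (g : Arrow B), g.left = p.obj e → ∃ f : Arrow E, f.left = e ∧ p.mapArrow.obj f = g

def LiftsTo (p : E ⥤ B) : Prop :=
  ∀ (e : E) (g : Arrow B), g.right = p.obj e → ∃ f : Arrow E, f.right = e ∧ p.mapArrow.obj f = g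

def UniqueLiftsFrom (p : E ⥤ B) : Prop :=
  ∀ f₁ f₂ : Arrow E, f₁.left = f₂.left → p.mapArrow.obj f₁ = p.mapArrow.obj f₂ → f₁ = f₂

def UniqueLiftsTo (p : E ⥤ B) : Prop :=
  ∀ f₁ f₂ : Arrow E, f₁.right = f₂.right → p.mapArrow.obj f₁ = p.mapArrow.obj f₂ → f₁ = f₂

def HasDiscreteFibers (p : E ⥤ B) : Prop :=
  ∀ (b : B) (e e' : E) (f : e ⟶ e') (he : p.obj e = b) (he' : p.obj e' = b),
    p.map f = eqToHom (he.trans he'.symm) → ∃ h : e = e', f = eqToHom h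

variable {p : E ⥤ B}

lemma LiftsTo.op (h : LiftsTo p) : LiftsFrom p.op := by
  intro e g hg
  obtain ⟨f, hf, hfg⟩ := h e.unop (Arrow.opEquiv B g) (congrArg Opposite.unop hg)
  exact ⟨(Arrow.opEquiv E).symm f, congrArg Opposite.op hf,
    (congrArg (Arrow.opEquiv B).symm hfg).trans ((Arrow.opEquiv B).symm_apply_apply g)⟩

lemma uniqueLiftsFrom_op_iff : UniqueLiftsFrom p.op ↔ UniqueLiftsTo p := by
  constructor
  · intro h f₁ f₂ hr hp
    exact (Arrow.opEquiv E).symm.injective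
      (h _ _ (congrArg Opposite.op hr) (congrArg (Arrow.opEquiv B).symm hp))
  · intro h f₁ f₂ hl hp
    exact (Arrow.opEquiv E).injective
      (h _ _ (congrArg Opposite.unop hl) (congrArg (Arrow.opEquiv B) hp))

lemma functorRLP_pick0_iff : FunctorRLP pick0 p ↔ LiftsFrom p := by
  constructor
  · intro h e g hg
    obtain ⟨H, hH, hHp⟩ := h ((Functor.const Pt).obj e) (arrowEquiv.symm g)
      ((const_comp_eq_iff _ _ _).2 hg).symm
    exact ⟨arrowEquiv H, (const_comp_eq_iff _ _ _).1 hH, congrArg arrowEquiv hHp⟩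
  · intro h F G sq
    obtain ⟨f, hf, hfp⟩ := h (F.obj ⟨⟨⟩⟩) (arrowEquiv G) (Functor.congr_obj sq.symm _)
    exact ⟨arrowEquiv.symm f, (const_comp_eq_iff _ _ _).2 hf, arrowEquiv.injective hfp⟩

lemma functorURLP_pick0_iff : FunctorURLP pick0 p ↔ LiftsFrom p ∧ UniqueLiftsFrom p := by
  rw [functorURLP_iff, functorRLP_pick0_iff]
  refine and_congr_right fun _ => ⟨fun h f₁ f₂ hl hp => ?_, fun h H H' h0 hp => ?_⟩
  · exact arrowEquiv.symm.injective (h _ _ ((const_comp_eq_iff _ _ _).2 hl)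
      (arrowEquiv.injective hp))
  · exact arrowEquiv.injective (h _ _ ((const_comp_eq_iff _ _ _).1 h0) (congrArg arrowEquiv hp))

lemma functorRLP_pick1_iff : FunctorRLP pick1 p ↔ LiftsTo p := by
  constructor
  · intro h e g hg
    obtain ⟨H, hH, hHp⟩ := h ((Functor.const Pt).obj e) (arrowEquiv.symm g)
      ((const_comp_eq_iff _ _ _).2 hg).symm
    exact ⟨arrowEquiv H, (const_comp_eq_iff _ _ _).1 hH, congrArg arrowEquiv hHp⟩
  · intro h F G sq
    obtain ⟨f, hf, hfp⟩ := h (F.obj ⟨⟨⟩⟩) (arrowEquiv G) (Functor.congr_obj sq.symm _)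
    exact ⟨arrowEquiv.symm f, (const_comp_eq_iff _ _ _).2 hf, arrowEquiv.injective hfp⟩

lemma functorURLP_pick1_iff : FunctorURLP pick1 p ↔ LiftsTo p ∧ UniqueLiftsTo p := by
  rw [functorURLP_iff, functorRLP_pick1_iff]
  refine and_congr_right fun _ => ⟨fun h f₁ f₂ hr hp => ?_, fun h H H' h1 hp => ?_⟩
  · exact arrowEquiv.symm.injective (h _ _ ((const_comp_eq_iff _ _ _).2 hr)
      (arrowEquiv.injective hp))
  · exact arrowEquiv.injective (h _ _ ((const_comp_eq_iff _ _ _).1 h1) (congrArg arrowEquiv hp))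

lemma functorRLP_pick0op_iff : FunctorRLP pick0op p ↔ LiftsTo p := by
  constructor
  · intro h e g hg
    obtain ⟨H, hH, hHp⟩ := h ((Functor.const Pt).obj e)
      (arrowEquiv.symm ((Arrow.opEquiv B).symm g)).leftOp
      ((const_comp_eq_iff _ _ _).2 hg).symm
    refine ⟨Arrow.opEquiv E (arrowEquiv H.rightOp), (const_comp_eq_iff _ _ _).1 hH, ?_⟩
    exact congrArg (fun K => Arrow.opEquiv B (arrowEquiv K.rightOp)) hHp
  · intro h F G sq
    obtain ⟨f, hf, hfp⟩ := h (F.obj ⟨⟨⟩⟩) (Arrow.opEquiv B (arrowEquiv G.rightOp))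
      (Functor.congr_obj sq.symm _)
    let H := (arrowEquiv.symm ((Arrow.opEquiv E).symm f)).leftOp
    have hHp : (H ⋙ p).rightOp = G.rightOp := arrowEquiv.injective
      ((congrArg (Arrow.opEquiv B).symm hfp).trans ((Arrow.opEquiv B).symm_apply_apply _))
    refine ⟨H, (const_comp_eq_iff _ _ _).2 hf, ?_⟩
    rw [← (H ⋙ p).rightOp_leftOp_eq, hHp, G.rightOp_leftOp_eq]

end ArrowLifts

namespace I2

def fst : z ⟶ a := homOfLE (Or.inr rfl)
def snd : z ⟶ b := homOfLE (Or.inr rfl)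

variable {C : Type*} [Category C]

lemma false_of_hom {x y : I2} (u : x ⟶ y) (hx : x ≠ z) (hxy : x ≠ y) : False :=
  hxy ((leOfHom u).resolve_right hx)

def span {X Y Z : C} (f : X ⟶ Y) (g : X ⟶ Z) : I2 ⥤ C where
  obj | z => X | a => Y | b => Z
  map {x y} u := match x, y, u with
    | z, z, _ => 𝟙 X
    | a, a, _ => 𝟙 Y
    | b, b, _ => 𝟙 Z
    | z, a, _ => f
    | z, b, _ => g
    | a, z, u | a, b, u | b, z, u | b, a, u => (false_of_hom u nofun nofun).elim
  map_id x := by cases x <;> rfl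
  map_comp {x y w} u v := by
    obtain rfl | rfl := leOfHom u
    · rw [Subsingleton.elim u (𝟙 x), Category.id_comp]
      cases x <;> exact (Category.id_comp _).symm
    obtain rfl | rfl := leOfHom v
    · rw [Subsingleton.elim v (𝟙 y), Category.comp_id]
      cases y <;> exact (Category.comp_id _).symm
    · rw [Subsingleton.elim u (𝟙 z), Category.id_comp]
      exact (Category.id_comp _).symm

lemma functor_ext {F G : I2 ⥤ C}
    (hfst : Arrow.mk (F.map fst) = Arrow.mk (G.map fst))
    (hsnd : Arrow.mk (F.map snd) = Arrow.mk (G.map snd)) : F = G := by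
  have hobj : ∀ x, F.obj x = G.obj x := by
    rintro (_ | _ | _)
    exacts [congrArg Arrow.left hfst, congrArg Arrow.right hfst, congrArg Arrow.right hsnd]
  have hid : ∀ x, Arrow.mk (F.map (𝟙 x)) = Arrow.mk (G.map (𝟙 x)) := fun x => by
    rw [F.map_id, G.map_id, hobj x]
  refine Arrow.functor_ext fun x y u => ?_
  obtain rfl | rfl := leOfHom u
  · obtain rfl := Subsingleton.elim u (𝟙 x)
    exact hid x
  · cases y
    · obtain rfl := Subsingleton.elim u (𝟙 z)
      exact hid z
    · obtain rfl := Subsingleton.elim u fst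
      exact hfst
    · obtain rfl := Subsingleton.elim u snd
      exact hsnd

end I2

namespace CS1

variable {C : Type*} [Category C]

lemma functor_ext {F G : CS1 ⥤ C}
    (ha : Arrow.mk (F.map Hom.a) = Arrow.mk (G.map Hom.a))
    (hf : Arrow.mk (F.map Hom.f) = Arrow.mk (G.map Hom.f))
    (hg : Arrow.mk (F.map Hom.g) = Arrow.mk (G.map Hom.g)) : F = G := by
  have hobj : ∀ x, F.obj x = G.obj x := by
    rintro (_ | _ | _)
    exacts [congrArg Arrow.left ha, congrArg Arrow.right ha, congrArg Arrow.right hf]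
  refine Arrow.functor_ext fun x y u => ?_
  change Hom x y at u
  cases u
  · change Arrow.mk (F.map (𝟙 x)) = Arrow.mk (G.map (𝟙 x))
    rw [F.map_id, G.map_id, hobj x]
  · exact ha
  · change Arrow.mk (F.map (Hom.a ≫ Hom.f)) = Arrow.mk (G.map (Hom.a ≫ Hom.f))
    simpa only [Functor.map_comp] using arrow_mk_comp_congr ha hf
  · exact hf
  · exact hg

end CS1

section Fibrations

variable {E B : Type*} [Category E] [Category B] {p : E ⥤ B}

lemma HasDiscreteFibers.arrow_mk_eq_id (hd : HasDiscreteFibers p) {e e' : E} (f : e ⟶ e')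
    {b : B} (hf : Arrow.mk (p.map f) = Arrow.mk (𝟙 b)) : Arrow.mk f = Arrow.mk (𝟙 e) := by
  obtain ⟨he, he', hf⟩ := (Arrow.mk_eq_mk_iff _ _).1 hf
  obtain ⟨rfl, rfl⟩ := hd b e e' f he he' (by simpa using hf)
  simp

lemma HasDiscreteFibers.op (hd : HasDiscreteFibers p) : HasDiscreteFibers p.op := by
  intro b e e' f he he' hf
  obtain ⟨h, hf'⟩ := hd b.unop e'.unop e.unop f.unop (congrArg Opposite.unop he')
    (congrArg Opposite.unop he) (by simpa [eqToHom_unop] using congrArg Quiver.Hom.unop hf)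
  exact ⟨Opposite.unop_injective h.symm, by simpa [eqToHom_op] using congrArg Quiver.Hom.op hf'⟩

lemma UniqueLiftsFrom.hasDiscreteFibers (hu : UniqueLiftsFrom p) : HasDiscreteFibers p := by
  intro b e e' f he he' hf
  have : Arrow.mk f = Arrow.mk (𝟙 e) := hu _ _ rfl <| by
    change Arrow.mk (p.map f) = Arrow.mk (p.map (𝟙 e))
    rw [hf, p.map_id, arrow_mk_eqToHom]
  obtain ⟨_, h, hf'⟩ := (Arrow.mk_eq_mk_iff _ _).1 this
  exact ⟨h.symm, by simpa using hf'⟩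

lemma functorRLP_i2Incl (hl : LiftsFrom p) (hu : UniqueLiftsFrom p) : FunctorRLP i2Incl p := by
  intro F (G : ComposableArrows B 2) sq
  have hfst : Arrow.mk (p.map (F.map I2.fst)) = Arrow.mk (G.map' 0 1) :=
    congrArg (fun K : I2 ⥤ B => Arrow.mk (K.map I2.fst)) sq
  have hsnd : Arrow.mk (p.map (F.map I2.snd)) = Arrow.mk (G.map' 0 2) :=
    congrArg (fun K : I2 ⥤ B => Arrow.mk (K.map I2.snd)) sq
  obtain ⟨⟨_, e, k⟩, rfl, hk⟩ :=
    hl (F.obj .a) (Arrow.mk (G.map' 1 2)) (congrArg Arrow.right hfst).symm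
  have hcomp : Arrow.mk (F.map I2.fst ≫ k) = Arrow.mk (F.map I2.snd) := by
    refine hu _ _ rfl ?_
    change Arrow.mk (p.map (F.map I2.fst ≫ k)) = Arrow.mk (p.map (F.map I2.snd))
    rw [p.map_comp, hsnd, G.map'_comp 0 1 2]
    exact arrow_mk_comp_congr hfst hk
  exact ⟨mk₂ (F.map I2.fst) k, I2.functor_ext rfl hcomp, ext₂_of_arrow hfst hk⟩

lemma functorRLP_cs1Incl (hu : UniqueLiftsFrom p) : FunctorRLP cs1Incl p := by
  intro F G sq
  have hpar : Arrow.mk (F.map CS1.Hom.f) = Arrow.mk (F.map CS1.Hom.g) :=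
    hu _ _ rfl ((congrArg (fun K : CS1 ⥤ B => Arrow.mk (K.map CS1.Hom.f)) sq).trans
      (congrArg (fun K : CS1 ⥤ B => Arrow.mk (K.map CS1.Hom.g)) sq).symm)
  exact ⟨mk₂ (F.map CS1.Hom.a) (F.map CS1.Hom.f), CS1.functor_ext rfl rfl hpar,
    ext₂_of_arrow (congrArg (fun K : CS1 ⥤ B => Arrow.mk (K.map CS1.Hom.a)) sq)
      (congrArg (fun K : CS1 ⥤ B => Arrow.mk (K.map CS1.Hom.f)) sq)⟩

lemma uniqueLiftsFrom_of_functorRLP_i2Incl (hI : FunctorRLP i2Incl p)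
    (hd : HasDiscreteFibers p) : UniqueLiftsFrom p := by
  rintro ⟨e, e₁, f₁⟩ ⟨_, e₂, f₂⟩ rfl hp
  change Arrow.mk (p.map f₁) = Arrow.mk (p.map f₂) at hp
  obtain ⟨H : ComposableArrows E 2, hHF, hHp⟩ := hI (I2.span f₁ f₂) (mk₂ (p.map f₁) (𝟙 _))
    (I2.functor_ext rfl (hp.symm.trans (by simp : _ = Arrow.mk (p.map f₁ ≫ 𝟙 _))))
  have hid : Arrow.mk (H.map' 1 2) = Arrow.mk (𝟙 (H.obj 1)) :=
    hd.arrow_mk_eq_id _ (congrArg (fun K : ComposableArrows B 2 => Arrow.mk (K.map' 1 2)) hHp)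
  change Arrow.mk f₁ = Arrow.mk f₂
  calc Arrow.mk f₁ = Arrow.mk (H.map' 0 1) :=
        (congrArg (fun K : I2 ⥤ E => Arrow.mk (K.map I2.fst)) hHF).symm
    _ = Arrow.mk (H.map' 0 1 ≫ H.map' 1 2) := by
        simpa using arrow_mk_comp_congr (rfl : Arrow.mk (H.map' 0 1) = _) hid.symm
    _ = Arrow.mk (H.map' 0 2) := by rw [H.map'_comp 0 1 2]
    _ = Arrow.mk f₂ := congrArg (fun K : I2 ⥤ E => Arrow.mk (K.map I2.snd)) hHF

end Fibrations

/-- **Statement 16.** A functor `p : E ⥤ B` between small categories is a covering iff it is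
a fibration of the 1-type model structure (i.e. has the right lifting property with respect
to every member of `J`) and all its fibers `p⁻¹(b)` are discrete categories (the only
morphisms lying over identities are identities). -/
theorem isCovering_iff_fibration_discrete_fibers
    (E : Type u) (B : Type u') [Category.{v} E] [Category.{v'} B] (p : E ⥤ B) :
    IsCovering p ↔
      (Is1Fibration p ∧
        ∀ (b : B) (e e' : E) (f : e ⟶ e') (he : p.obj e = b) (he' : p.obj e' = b),
          p.map f = eqToHom (he.trans he'.symm) → ∃ h : e = e', f = eqToHom h) := by
  change FunctorURLP pick0 p ∧ FunctorURLP pick1 p ↔ Is1Fibration p ∧ HasDiscreteFibers p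
  rw [functorURLP_pick0_iff, functorURLP_pick1_iff, ← uniqueLiftsFrom_op_iff]
  constructor
  · rintro ⟨⟨hl, hu⟩, hl', hu'⟩
    exact ⟨⟨functorRLP_pick0_iff.2 hl, functorRLP_pick0op_iff.2 hl', functorRLP_i2Incl hl hu,
      (functorRLP_op_iff _ _).2 (functorRLP_i2Incl hl'.op hu'), functorRLP_cs1Incl hu,
      (functorRLP_op_iff _ _).2 (functorRLP_cs1Incl hu')⟩, hu.hasDiscreteFibers⟩
  · rintro ⟨⟨h0, h0op, hI, hIop, -, -⟩, hd⟩
    exact ⟨⟨functorRLP_pick0_iff.1 h0, uniqueLiftsFrom_of_functorRLP_i2Incl hI hd⟩,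
      functorRLP_pick0op_iff.1 h0op,
      uniqueLiftsFrom_of_functorRLP_i2Incl ((functorRLP_op_iff _ _).1 hIop) hd.op⟩

end Paper
end
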